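/- Let 1 → μ_m → G̃ →p G → 1 be a central extension of groups. Suppose every element x ∈ G admits a Jordan-type decomposition x = σu = uσ with σ in a specified class S of 'semisimple' elements, u in a specified class U of 'unipotent' elements, this decomposition being unique, and suppose there is a conjugation-invariant section s: U → G̃ of p. Then every x̃ ∈ G̃ admits a unique decomposition x̃ = σ̃·s(u) = s(u)·σ̃ with p(σ̃) ∈ S, u ∈ U. -/

import Mathlib

/-!
If `p x̃ = σu` is the Jordan decomposition, then `p x̃` commutes with `u`, so conjugation
invariance of the section gives `x̃ s(u) x̃⁻¹ = s(u)`; hence `σ̃ := x̃ s(u)⁻¹` commutes with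
`s(u)` and lies over `σ`. Conversely, any lifted decomposition `x̃ = σ̃ s(u')` projects to a
Jordan decomposition of `p x̃`, so `u' = u` and then `σ̃ = x̃ s(u)⁻¹`.
-/

section LiftedJordan

variable {Gt G : Type*} [Group Gt] [Group G] {p : Gt →* G} {U : Set G} {s : G → Gt}

theorem commute_section_of_commute
    (hsconj : ∀ g : Gt, ∀ u ∈ U, g * s u * g⁻¹ = s (p g * u * (p g)⁻¹))
    {g : Gt} {u : G} (hu : u ∈ U) (h : Commute (p g) u) : Commute g (s u) := by
  have hfix : g * s u * g⁻¹ = s u := by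
    rw [hsconj g u hu, h.eq, mul_inv_cancel_right]
  exact mul_inv_eq_iff_eq_mul.mp hfix

theorem map_lifted_decomposition (hsec : ∀ u ∈ U, p (s u) = u)
    {xt σt : Gt} {u : G} (hu : u ∈ U) (hx : xt = σt * s u) (hc : σt * s u = s u * σt) :
    p xt = p σt * u ∧ p σt * u = u * p σt := by
  have hc' := congrArg p hc
  rw [map_mul, map_mul, hsec u hu] at hc'
  exact ⟨by rw [hx, map_mul, hsec u hu], hc'⟩

end LiftedJordan

theorem lifted_jordan_decomposition_general
    {Gt G : Type*} [Group Gt] [Group G]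
    (p : Gt →* G)
    (S U : Set G)
    (hJordan : ∀ x : G, ∃! su : G × G, su.1 ∈ S ∧ su.2 ∈ U ∧
      x = su.1 * su.2 ∧ su.1 * su.2 = su.2 * su.1)
    (s : G → Gt)
    (hsec : ∀ u ∈ U, p (s u) = u)
    (hsconj : ∀ g : Gt, ∀ u ∈ U, g * s u * g⁻¹ = s (p g * u * (p g)⁻¹)) :
    ∀ xt : Gt, ∃! d : Gt × G, p d.1 ∈ S ∧ d.2 ∈ U ∧
      xt = d.1 * s d.2 ∧ d.1 * s d.2 = s d.2 * d.1 := by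
  intro xt
  obtain ⟨⟨σ, u⟩, ⟨hσ, hu, hx, hσu⟩, huniq⟩ := hJordan (p xt)
  have hxu : Commute xt (s u) :=
    commute_section_of_commute hsconj hu (hx ▸ Commute.mul_left hσu (Commute.refl u))
  have hpσ : p (xt * (s u)⁻¹) = σ := by
    rw [map_mul, map_inv, hsec u hu, hx, mul_inv_cancel_right]
  refine ⟨(xt * (s u)⁻¹, u), ⟨hpσ ▸ hσ, hu, (inv_mul_cancel_right xt (s u)).symm,
    hxu.mul_left (Commute.refl (s u)).inv_left⟩, ?_⟩
  rintro ⟨σt', u'⟩ ⟨hσ', hu', hx', hc'⟩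
  obtain ⟨hpx, hpc⟩ := map_lifted_decomposition hsec hu' hx' hc'
  obtain rfl : u' = u := congrArg Prod.snd (huniq (p σt', u') ⟨hσ', hu', hpx, hpc⟩)
  rw [hx', mul_inv_cancel_right]

/-- Lifted Jordan decomposition: let `1 → μ_m → G̃ → G → 1` be a central
extension, `S` and `U` conjugation-invariant classes of "semisimple" and
"unipotent" elements of `G` such that every `x ∈ G` has a unique commuting
decomposition `x = σu = uσ` with `σ ∈ S`, `u ∈ U`, and let `s : U → G̃` be a
conjugation-invariant section of `p` over `U`. Then every `x̃ ∈ G̃` admits a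
unique decomposition `x̃ = σ̃·s(u) = s(u)·σ̃` with `p(σ̃) ∈ S` and `u ∈ U`. -/
theorem lifted_jordan_decomposition
    {Gt G : Type*} [Group Gt] [Group G] (m : ℕ)
    (p : Gt →* G) (hsurj : Function.Surjective p)
    (hcentral : ∀ z ∈ p.ker, z ∈ Subgroup.center Gt)
    (hexp : ∀ z ∈ p.ker, z ^ m = 1)
    (S U : Set G)
    (hSconj : ∀ g : G, ∀ σ ∈ S, g * σ * g⁻¹ ∈ S)
    (hUconj : ∀ g : G, ∀ u ∈ U, g * u * g⁻¹ ∈ U)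
    (hJordan : ∀ x : G, ∃! su : G × G, su.1 ∈ S ∧ su.2 ∈ U ∧
      x = su.1 * su.2 ∧ su.1 * su.2 = su.2 * su.1)
    (s : G → Gt)
    (hsec : ∀ u ∈ U, p (s u) = u)
    (hsconj : ∀ g : Gt, ∀ u ∈ U, g * s u * g⁻¹ = s (p g * u * (p g)⁻¹)) :
    ∀ xt : Gt, ∃! d : Gt × G, p d.1 ∈ S ∧ d.2 ∈ U ∧
      xt = d.1 * s d.2 ∧ d.1 * s d.2 = s d.2 * d.1 :=
  lifted_jordan_decomposition_general p S U hJordan s hsec hsconj
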